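/- Let M be a positive integer, h > 0, and let u⁰, u¹, v⁰, v¹ be periodic grid functions satisfying v^k_i = δ_x² u^k_i − (h²/12)·δ_x² v^k_i for all i and k = 0, 1. Then (v¹ − v⁰, (u⁰ + u¹)/2) = −(1/2)·[(|u¹|₁² − |u⁰|₁²) + (h²/12)·(‖v¹‖² − ‖v⁰‖²) − (h⁴/144)·(|v¹|₁² − |v⁰|₁²)]. (Key energy-pairing identity, equation (2.25) in the proof of Theorem 1.) -/

import Mathlib

open Finset

namespace BBMB

/-- A periodic grid function with period `M`. -/
def Periodic (M : ℕ) (u : ℤ → ℝ) : Prop := ∀ i : ℤ, u (i + (M : ℤ)) = u i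

/-- Forward difference `δ_x u_{i+1/2} = (u_{i+1} - u_i)/h`. -/
noncomputable def dxp (h : ℝ) (u : ℤ → ℝ) (i : ℤ) : ℝ := (u (i + 1) - u i) / h

/-- Backward difference `δ_x u_{i-1/2} = (u_i - u_{i-1})/h`. -/
noncomputable def dxm (h : ℝ) (u : ℤ → ℝ) (i : ℤ) : ℝ := (u i - u (i - 1)) / h

/-- Second difference `δ_x² u_i = (u_{i+1} - 2 u_i + u_{i-1})/h²`. -/
noncomputable def dxx (h : ℝ) (u : ℤ → ℝ) (i : ℤ) : ℝ :=
  (u (i + 1) - 2 * u i + u (i - 1)) / h ^ 2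

/-- Centered difference `Δ_x u_i = (u_{i+1} - u_{i-1})/(2h)`. -/
noncomputable def Dx (h : ℝ) (u : ℤ → ℝ) (i : ℤ) : ℝ := (u (i + 1) - u (i - 1)) / (2 * h)

/-- Discrete inner product `(u, w) = h ∑_{i=1}^{M} u_i w_i`. -/
noncomputable def ip (M : ℕ) (h : ℝ) (u w : ℤ → ℝ) : ℝ :=
  h * ∑ i ∈ Finset.Icc (1 : ℤ) (M : ℤ), u i * w i

/-- Discrete inner product `⟨δ_x u, δ_x w⟩ = h ∑_{i=1}^{M} (δ_x u_{i-1/2})(δ_x w_{i-1/2})`. -/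
noncomputable def dip (M : ℕ) (h : ℝ) (u w : ℤ → ℝ) : ℝ :=
  h * ∑ i ∈ Finset.Icc (1 : ℤ) (M : ℤ), dxm h u i * dxm h w i

/-- Discrete `L²` norm `‖u‖ = √((u,u))`. -/
noncomputable def nrm (M : ℕ) (h : ℝ) (u : ℤ → ℝ) : ℝ := Real.sqrt (ip M h u u)

/-- Discrete `H¹` seminorm `|u|₁ = √(⟨δ_x u, δ_x u⟩)`. -/
noncomputable def snorm (M : ℕ) (h : ℝ) (u : ℤ → ℝ) : ℝ := Real.sqrt (dip M h u u)

/-- Trilinear term `ψ(u,v)_i = (1/3) (u_i Δ_x v_i + Δ_x (u·v)_i)`. -/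
noncomputable def psi (h : ℝ) (u v : ℤ → ℝ) (i : ℤ) : ℝ :=
  (1 / 3) * (u i * Dx h v i + Dx h (fun j => u j * v j) i)

/-
Summation by parts, `(δ_x² a, b) = -⟨δ_x a, δ_x b⟩` for periodic `a, b`, turns the compact relation
`v = δ_x² u - c δ_x² v` into `(v, u') = -⟨δ_x u, δ_x u'⟩ - c (v, v') + c² ⟨δ_x v, δ_x v'⟩` for any
two periodic solution pairs `(u, v)`, `(u', v')`. The right side is symmetric in the two pairs, so
in `(v¹ - v⁰, (u⁰ + u¹)/2)` the cross terms `(v¹, u⁰)` and `(v⁰, u¹)` cancel, and the diagonal terms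
`(vᵏ, uᵏ)` are the energies, with `c = h²/12`.
-/

theorem sum_Ioc_add_one_of_periodic {β : Type*} [AddCancelCommMonoid β] {F : ℤ → β} {n : ℤ}
    (hF : Function.Periodic F n) (hn : 0 ≤ n) (a : ℤ) :
    ∑ i ∈ Ioc a (a + n), F (i + 1) = ∑ i ∈ Ioc a (a + n), F i := by
  have hshift : ∑ i ∈ Ioc a (a + n), F (i + 1) = ∑ i ∈ Ioc (a + 1) (a + n + 1), F i := by
    rw [← map_add_right_Ioc, sum_map]
    rfl
  have htop : ∑ i ∈ Ioc a (a + n + 1), F i = F (a + 1) + ∑ i ∈ Ioc a (a + n), F i := by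
    rw [← insert_Ioc_right_eq_Ioc_add_one (by omega), sum_insert (by simp), add_right_comm,
      hF (a + 1)]
  have hbot : ∑ i ∈ Ioc a (a + n + 1), F i = F (a + 1) + ∑ i ∈ Ioc (a + 1) (a + n + 1), F i := by
    rw [← insert_Ioc_add_one_left_eq_Ioc (by omega), sum_insert (by simp)]
  rw [hshift]
  exact add_left_cancel (hbot.symm.trans htop)

section GridCalculus

variable {M : ℕ} {h : ℝ}

theorem ip_comm (u w : ℤ → ℝ) : ip M h u w = ip M h w u := by
  simp only [ip, mul_comm (u _)]

theorem dip_comm (u w : ℤ → ℝ) : dip M h u w = dip M h w u := by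
  simp only [dip, mul_comm (dxm h u _)]

theorem ip_add_smul_left (x y w : ℤ → ℝ) (c : ℝ) :
    ip M h (fun i => x i + c * y i) w = ip M h x w + c * ip M h y w := by
  simp only [ip, add_mul, mul_assoc, sum_add_distrib, ← mul_sum]
  ring

theorem ip_sub_smul_left (x y w : ℤ → ℝ) (c : ℝ) :
    ip M h (fun i => x i - c * y i) w = ip M h x w - c * ip M h y w := by
  simp only [ip, sub_mul, mul_assoc, sum_sub_distrib, ← mul_sum]
  ring

theorem ip_sub_left_avg_right (x y u w : ℤ → ℝ) :
    ip M h (fun i => x i - y i) (fun i => (u i + w i) / 2) =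
      (ip M h x u + ip M h x w - ip M h y u - ip M h y w) / 2 := by
  simp only [ip, mul_sum, ← sum_add_distrib, ← sum_sub_distrib, sum_div]
  exact sum_congr rfl fun i _ => by ring

theorem sq_nrm (hh : 0 ≤ h) (u : ℤ → ℝ) : nrm M h u ^ 2 = ip M h u u :=
  Real.sq_sqrt (mul_nonneg hh (sum_nonneg fun _ _ => mul_self_nonneg _))

theorem sq_snorm (hh : 0 ≤ h) (u : ℤ → ℝ) : snorm M h u ^ 2 = dip M h u u :=
  Real.sq_sqrt (mul_nonneg hh (sum_nonneg fun _ _ => mul_self_nonneg _))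

theorem sum_Icc_add_one_of_periodic {F : ℤ → ℝ} (hF : Periodic M F) :
    ∑ i ∈ Icc 1 (M : ℤ), F (i + 1) = ∑ i ∈ Icc 1 (M : ℤ), F i := by
  have hIcc : Icc 1 (M : ℤ) = Ioc 0 (0 + (M : ℤ)) := by
    simpa using Icc_add_one_left_eq_Ioc (0 : ℤ) M
  rw [hIcc]
  exact sum_Ioc_add_one_of_periodic hF (Int.natCast_nonneg M) 0

theorem ip_dxx_left (hh : h ≠ 0) {a b : ℤ → ℝ} (ha : Periodic M a) (hb : Periodic M b) :
    ip M h (dxx h a) b = -dip M h a b := by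
  have hshift : ∑ i ∈ Icc 1 (M : ℤ), dxm h a (i + 1) * b i
      = ∑ i ∈ Icc 1 (M : ℤ), dxm h a i * b (i - 1) := by
    have hper : Periodic M fun i => dxm h a i * b (i - 1) := fun i => by
      simp only [dxm, ha i, ha (i - 1), hb (i - 1), show i + M - 1 = i - 1 + M by ring]
    simpa using sum_Icc_add_one_of_periodic hper
  calc ip M h (dxx h a) b
      = ∑ i ∈ Icc 1 (M : ℤ), (dxm h a (i + 1) * b i - dxm h a i * b i) := by
        rw [ip, mul_sum]
        refine sum_congr rfl fun i _ => ?_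
        simp only [dxx, dxm, add_sub_cancel_right]
        field_simp
        ring
    _ = ∑ i ∈ Icc 1 (M : ℤ), (dxm h a i * b (i - 1) - dxm h a i * b i) := by
        rw [sum_sub_distrib, sum_sub_distrib, hshift]
    _ = -dip M h a b := by
        rw [dip, mul_sum, ← sum_neg_distrib]
        refine sum_congr rfl fun i _ => ?_
        simp only [dxm]
        field_simp
        ring

theorem ip_eq_of_compact_relation (hh : h ≠ 0) (c : ℝ) {u v u' v' : ℤ → ℝ}
    (hu : Periodic M u) (hv : Periodic M v) (hu' : Periodic M u') (hv' : Periodic M v')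
    (hrel : ∀ i, v i = dxx h u i - c * dxx h v i)
    (hrel' : ∀ i, v' i = dxx h u' i - c * dxx h v' i) :
    ip M h v u' = -dip M h u u' - c * ip M h v v' + c ^ 2 * dip M h v v' := by
  have hdxx' : dxx h u' = fun i => v' i + c * dxx h v' i := funext fun i => by
    rw [hrel' i]; ring
  calc ip M h v u'
      = ip M h (fun i => dxx h u i - c * dxx h v i) u' := congrArg (ip M h · u') (funext hrel)
    _ = -dip M h u u' - c * ip M h (dxx h u') v := by
        rw [ip_sub_smul_left, ip_dxx_left hh hu hu', ip_dxx_left hh hv hu', dip_comm v,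
          ip_dxx_left hh hu' hv]
    _ = -dip M h u u' - c * ip M h v v' + c ^ 2 * dip M h v v' := by
        rw [hdxx', ip_add_smul_left, ip_dxx_left hh hv' hv, ip_comm v', dip_comm v']
        ring

end GridCalculus

theorem energy_pairing_general (M : ℕ) (h : ℝ) (u0 u1 v0 v1 : ℤ → ℝ)
    (hh : 0 < h)
    (hu0 : Periodic M u0) (hu1 : Periodic M u1)
    (hv0 : Periodic M v0) (hv1 : Periodic M v1)
    (hrel0 : ∀ i : ℤ, v0 i = dxx h u0 i - h ^ 2 / 12 * dxx h v0 i)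
    (hrel1 : ∀ i : ℤ, v1 i = dxx h u1 i - h ^ 2 / 12 * dxx h v1 i) :
    ip M h (fun i => v1 i - v0 i) (fun i => (u0 i + u1 i) / 2) =
      -(1 / 2) * (((snorm M h u1) ^ 2 - (snorm M h u0) ^ 2)
        + h ^ 2 / 12 * ((nrm M h v1) ^ 2 - (nrm M h v0) ^ 2)
        - h ^ 4 / 144 * ((snorm M h v1) ^ 2 - (snorm M h v0) ^ 2)) := by
  have pairing := @ip_eq_of_compact_relation M h hh.ne' (h ^ 2 / 12)
  rw [ip_sub_left_avg_right, pairing hu1 hv1 hu0 hv0 hrel1 hrel0,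
    pairing hu1 hv1 hu1 hv1 hrel1 hrel1, pairing hu0 hv0 hu0 hv0 hrel0 hrel0,
    pairing hu0 hv0 hu1 hv1 hrel0 hrel1, dip_comm u1 u0, ip_comm v1 v0, dip_comm v1 v0]
  simp only [sq_snorm hh.le, sq_nrm hh.le]
  ring

/-- Key energy-pairing identity (2.25) in the proof of Theorem 1. -/
theorem energy_pairing (M : ℕ) (h : ℝ) (u0 u1 v0 v1 : ℤ → ℝ)
    (hM : 0 < M) (hh : 0 < h)
    (hu0 : Periodic M u0) (hu1 : Periodic M u1)
    (hv0 : Periodic M v0) (hv1 : Periodic M v1)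
    (hrel0 : ∀ i : ℤ, v0 i = dxx h u0 i - h ^ 2 / 12 * dxx h v0 i)
    (hrel1 : ∀ i : ℤ, v1 i = dxx h u1 i - h ^ 2 / 12 * dxx h v1 i) :
    ip M h (fun i => v1 i - v0 i) (fun i => (u0 i + u1 i) / 2) =
      -(1 / 2) * (((snorm M h u1) ^ 2 - (snorm M h u0) ^ 2)
        + h ^ 2 / 12 * ((nrm M h v1) ^ 2 - (nrm M h v0) ^ 2)
        - h ^ 4 / 144 * ((snorm M h v1) ^ 2 - (snorm M h v0) ^ 2)) :=
  energy_pairing_general M h u0 u1 v0 v1 hh hu0 hu1 hv0 hv1 hrel0 hrel1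

end BBMB
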